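/- The parameter derivative of the Charlier polynomial satisfies ∂/∂μ c_n^{(μ)}(x) = (n/μ) c_{n−1}^{(μ)}(x) − (n/μ) c_n^{(μ)}(x) for n ≥ 1 and μ ≠ 0. -/

import Mathlib

open Finset

/-- Pochhammer symbol `(a)_k = a(a+1)⋯(a+k−1)`. -/
noncomputable def poch (a : ℝ) (k : ℕ) : ℝ := ∏ j ∈ Finset.range k, (a + j)

/-- Charlier polynomial `c_n^{(μ)}(x) = ∑_{k=0}^n (−n)_k (−x)_k (−1/μ)^k / k!`. -/
noncomputable def charlier (n : ℕ) (μ x : ℝ) : ℝ :=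
  ∑ k ∈ Finset.range (n + 1),
    poch (-(n : ℝ)) k * poch (-x) k * (-1 / μ) ^ k / (Nat.factorial k)

/-!
Differentiating term by term, `d/dμ (-1/μ)^k = -(k/μ) (-1/μ)^k`, and the Pochhammer identity
`(a)_k (a + k) = a (a+1)_k` at `a = -n` gives `-k (-n)_k = n (-n+1)_k - n (-n)_k`. Summing over
`k ≤ n` yields the claim, where the sum for `c_{n-1}` may run up to `k = n` because `(-n+1)_n = 0`.
-/

open Polynomial

theorem poch_eq_eval_ascPochhammer (a : ℝ) (k : ℕ) : poch a k = (ascPochhammer ℝ k).eval a := by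
  induction k with
  | zero => simp [poch]
  | succ k ih => rw [poch, prod_range_succ, ← poch, ih, ascPochhammer_succ_eval]

theorem poch_mul_add (a : ℝ) (k : ℕ) : poch a k * (a + k) = a * poch (a + 1) k := by
  simp only [poch_eq_eval_ascPochhammer, ← ascPochhammer_succ_eval, ascPochhammer_succ_left,
    eval_mul, eval_X, eval_comp, eval_add, eval_one]

theorem poch_neg_natCast_of_lt {n k : ℕ} (h : n < k) : poch (-n) k = 0 := by
  rw [poch_eq_eval_ascPochhammer, ascPochhammer_eval_neg_coe_nat_of_lt h]

theorem hasDerivAt_neg_one_div_pow (k : ℕ) {μ : ℝ} (hμ : μ ≠ 0) :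
    HasDerivAt (fun m : ℝ => (-1 / m) ^ k) (-(k / μ) * (-1 / μ) ^ k) μ := by
  have h := ((hasDerivAt_inv hμ).const_mul (-1 : ℝ)).fun_pow k
  simp only [neg_one_mul, ← neg_div, inv_eq_one_div] at h
  refine h.congr_deriv ?_
  rcases k with _ | k
  · simp
  · rw [Nat.add_sub_cancel]
    push_cast
    ring

theorem charlier_eq_sum_range_of_le {n N : ℕ} (h : n + 1 ≤ N) (μ x : ℝ) :
    charlier n μ x = ∑ k ∈ range N, poch (-n) k * poch (-x) k * (-1 / μ) ^ k / k.factorial := by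
  refine sum_subset (range_subset_range.2 h) fun k _ hk => ?_
  rw [poch_neg_natCast_of_lt (by simpa using hk)]
  simp

theorem hasDerivAt_charlier (n : ℕ) {μ : ℝ} (hμ : μ ≠ 0) (x : ℝ) :
    HasDerivAt (fun m => charlier n m x)
      (∑ k ∈ range (n + 1), poch (-n) k * poch (-x) k * (-(k / μ) * (-1 / μ) ^ k) / k.factorial) μ :=
  HasDerivAt.fun_sum fun k _ =>
    ((hasDerivAt_neg_one_div_pow k hμ).const_mul _).div_const _

theorem sum_range_succ_charlier_deriv (n : ℕ) (μ x : ℝ) :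
    ∑ k ∈ range (n + 2),
        poch (-(n + 1 : ℕ)) k * poch (-x) k * (-(k / μ) * (-1 / μ) ^ k) / k.factorial =
      ((n + 1 : ℕ) / μ) * charlier n μ x - ((n + 1 : ℕ) / μ) * charlier (n + 1) μ x := by
  rw [charlier_eq_sum_range_of_le (N := n + 2) (by omega), charlier, mul_sum, mul_sum,
    ← sum_sub_distrib]
  refine sum_congr rfl fun k _ => ?_
  have h := poch_mul_add (-(n + 1 : ℕ)) k
  push_cast at h ⊢
  rw [show -((n : ℝ) + 1) + 1 = -n by ring] at h
  linear_combination -(poch (-x) k * (-1 / μ) ^ k / μ / k.factorial) * h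

theorem charlier_parameter_derivative (n : ℕ) (hn : 1 ≤ n) (μ : ℝ) (hμ : μ ≠ 0) (x : ℝ) :
    HasDerivAt (fun m : ℝ => charlier n m x)
      ((n / μ) * charlier (n - 1) μ x - (n / μ) * charlier n μ x) μ := by
  obtain ⟨n, rfl⟩ := Nat.exists_eq_add_of_le' hn
  rw [Nat.add_sub_cancel, ← sum_range_succ_charlier_deriv]
  exact hasDerivAt_charlier (n + 1) hμ x
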